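/- arXiv:1503.06682 — 2 statements merged into one kernel-verified Lean document; each statement's English description precedes it below -/
import Mathlib

section
/- Let X be a smooth quartic surface in P^3 with hyperplane class H (so H^2 = 4, H ample). There is no divisor class L2 on X with L2 effective, nonzero, L2^2 ≥ 0, and H·L2 ≤ 1. -/
/-- Let `X` be a smooth quartic surface in `ℙ³` with hyperplane class `H`
(so `H² = 4`, `H` very ample; ampleness gives `H·D ≥ 1` for nonzero effective `D`; the
Hodge index theorem gives `(H·D)² ≥ H²·D²` whenever `D² ≥ 0`; and very ampleness excludes
nonzero effective classes with `D² = 0, H·D = 1`).  Then there is no divisor class `L2`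
on `X` with `L2` effective, nonzero, `L2² ≥ 0`, and `H·L2 ≤ 1`. -/
theorem stmt7 {Pic : Type*} [AddCommGroup Pic]
    (b : Pic →ₗ[ℤ] Pic →ₗ[ℤ] ℤ)
    (hsymm : ∀ x y : Pic, b x y = b y x)
    (Eff : Pic → Prop) (H : Pic)
    (hH2 : b H H = 4)
    (hample : ∀ D : Pic, Eff D → D ≠ 0 → 1 ≤ b H D)
    (hodge : ∀ D : Pic, 0 ≤ b D D → b H H * b D D ≤ (b H D) ^ 2)
    (hveryample : ∀ D : Pic, Eff D → D ≠ 0 → ¬(b D D = 0 ∧ b H D = 1)) :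
    ¬ ∃ L2 : Pic, Eff L2 ∧ L2 ≠ 0 ∧ 0 ≤ b L2 L2 ∧ b H L2 ≤ 1 := by
  rintro ⟨L, hEff, hne, hL2, hHL⟩
  have h1 : b H L = 1 := le_antisymm hHL (hample L hEff hne)
  have hh := hodge L hL2
  rw [hH2, h1] at hh
  have hz : b L L = 0 := by omega
  exact hveryample L hEff hne ⟨hz, h1⟩
end

section
/- Let X be a K3 surface that is a double cover of P^2 with H' = π*O(1) ample, H'^2 = 2, and let F be an effective divisor class with F^2 = 0, F ≠ 0. Then H'·F ≥ 3. -/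
/-- Let `X` be a K3 surface that is a double cover of `ℙ²` with
`H' = π*O(1)` ample and `H'² = 2` (so `H'·D ≥ 1` for nonzero effective `D`, and on a K3
any class of square `-2` is, up to sign, effective), and let `F` be a nonzero effective
divisor class with `F² = 0`.  Then `H'·F ≥ 3`. -/
theorem stmt8 {Pic : Type*} [AddCommGroup Pic]
    (b : Pic →ₗ[ℤ] Pic →ₗ[ℤ] ℤ)
    (hsymm : ∀ x y : Pic, b x y = b y x)
    (Eff : Pic → Prop) (H' F : Pic)
    (hH'2 : b H' H' = 2)
    (hample : ∀ D : Pic, Eff D → D ≠ 0 → 1 ≤ b H' D)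
    (hminus2 : ∀ D : Pic, D ≠ 0 → b D D = -2 → Eff D ∨ Eff (-D))
    (hFeff : Eff F) (hFne : F ≠ 0) (hFsq : b F F = 0) :
    3 ≤ b H' F := by
  have h1 : 1 ≤ b H' F := hample F hFeff hFne
  have hFH : b F H' = b H' F := hsymm F H'
  by_contra hlt
  push_neg at hlt
  -- b H' F = 1 or 2
  interval_cases h : (b H' F)
  · -- b H' F = 1, take D = H' - 2F
    set D := H' - (2 : ℤ) • F with hD
    have hDD : b D D = -2 := by
      simp only [hD, map_sub, map_smul, LinearMap.sub_apply, LinearMap.smul_apply,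
        smul_eq_mul, hH'2, hFsq, hFH, h]
      ring
    have hHD : b H' D = 0 := by
      simp only [hD, map_sub, map_smul, LinearMap.sub_apply, LinearMap.smul_apply,
        smul_eq_mul, hH'2, h]
      ring
    have hDne : D ≠ 0 := by
      intro h0
      have hEq : H' = (2 : ℤ) • F := by rw [hD] at h0; linear_combination (norm := abel) h0
      have : b H' H' = 0 := by
        rw [hEq]
        simp only [map_smul, LinearMap.smul_apply, smul_eq_mul, hFsq]
        ring
      omega
    rcases hminus2 D hDne hDD with he | he
    · have := hample D he hDne; omega
    · have hne : -D ≠ 0 := by simpa using hDne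
      have := hample (-D) he hne
      rw [map_neg] at this; omega
  · -- b H' F = 2, take D = H' - F
    set D := H' - F with hD
    have hDD : b D D = -2 := by
      simp only [hD, map_sub, LinearMap.sub_apply, hH'2, hFsq, hFH, h]
      ring
    have hHD : b H' D = 0 := by
      simp only [hD, map_sub, hH'2, h]
      ring
    have hDne : D ≠ 0 := by
      intro h0
      have hHF : H' = F := by rw [hD] at h0; linear_combination (norm := abel) h0
      rw [hHF] at hH'2
      omega
    rcases hminus2 D hDne hDD with he | he
    · have := hample D he hDne; omega
    · have hne : -D ≠ 0 := by simpa using hDne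
      have := hample (-D) he hne
      rw [map_neg] at this; omega
end
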